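/- arXiv:2503.18214 — 2 statements merged into one kernel-verified Lean document; each statement's English description precedes it below -/
import Mathlib

section
/- There is no finite digraph D such that: (a) there is a homomorphism from D to P_3; (b) there is a homomorphism from P_2 to D; (c) there is no homomorphism from D to P_2; and (d) for every finite digraph C, if there is a homomorphism from P_2 to C and a homomorphism from C to D, then C is hom-equivalent to D or C is hom-equivalent to P_2. (In query terms: no Boolean conjunctive query O over a single binary relation satisfies P_3 ⊑ O ⊑_m P_2, where ⊑_m denotes maximal containment.) -/
/-!
If `D → P_3` but `D ↛ P_2`, some oriented path `Q_k = O_{11(01)^k 1}` maps to `D`. Every `Q_k`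
receives `P_2` but, having net height `3`, does not map to `P_2`. Moreover `Q_{k+1} → Q_k` but
`Q_k ↛ Q_{k+1}`: a map must send the endpoints of `Q_k`, at levels `0` and `3`, to those of
`Q_{k+1}`, which are further apart than the length of `Q_k`. So `Q_{k+1}` lies between `P_2` and
`D` and is not equivalent to `P_2`; maximality forces `D → Q_{k+1}`, whence `Q_k → D → Q_{k+1}`.
-/

/-- A digraph homomorphism from `(V, E)` to `(W, F)`. -/
def DigraphHom {V W : Type*} (E : V → V → Prop) (F : W → W → Prop) (h : V → W) : Prop :=
  ∀ u v, E u v → F (h u) (h v)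

/-- There exists a digraph homomorphism from `(V, E)` to `(W, F)`. -/
def HomEx {V W : Type*} (E : V → V → Prop) (F : W → W → Prop) : Prop :=
  ∃ h : V → W, DigraphHom E F h

/-- The oriented path `O_s` for a word `s ∈ {0,1}^n`: vertices `0, …, n`, and for
each `j < n` the edge `j → j+1` if `s_j = 1` (true) and `j+1 → j` if `s_j = 0` (false). -/
def OPath (s : List Bool) (u v : Fin (s.length + 1)) : Prop :=
  ∃ j : Fin s.length,
    (s.get j = true ∧ (u : ℕ) = (j : ℕ) ∧ (v : ℕ) = (j : ℕ) + 1) ∨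
    (s.get j = false ∧ (u : ℕ) = (j : ℕ) + 1 ∧ (v : ℕ) = (j : ℕ))

/-- The word `1^n`, so that `OPath (PWord n)` is the directed path `P_n`. -/
def PWord (n : ℕ) : List Bool := List.replicate n true

/-- The word `(01)^i 1`. -/
def QTail : ℕ → List Bool
  | 0 => [true]
  | i + 1 => false :: true :: QTail i

/-- The word `11(01)^i 1`, so that `OPath (QWord i)` is the oriented path
`Q_i = O_{11(01)^i 1}` for `i ≥ 1`, and `OPath (QWord 0)` is `Q_0 = P_3`. -/
def QWord (i : ℕ) : List Bool := true :: true :: QTail i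

lemma HomEx.trans {U V W : Type*} {E : U → U → Prop} {F : V → V → Prop} {G : W → W → Prop}
    (h₁ : HomEx E F) (h₂ : HomEx F G) : HomEx E G := by
  obtain ⟨f, hf⟩ := h₁
  obtain ⟨g, hg⟩ := h₂
  exact ⟨g ∘ f, fun u v h => hg _ _ (hf u v h)⟩

section OrientedPath

variable {s : List Bool} {W : Type*} {F : W → W → Prop}

lemma oPath_iff {u v : Fin (s.length + 1)} :
    OPath s u v ↔
      (∃ h : (u : ℕ) < s.length, s[(u : ℕ)] = true ∧ (v : ℕ) = u + 1) ∨
      (∃ h : (v : ℕ) < s.length, s[(v : ℕ)] = false ∧ (u : ℕ) = v + 1) := by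
  constructor
  · rintro ⟨⟨j, hj⟩, ⟨hs, hu, hv⟩ | ⟨hs, hu, hv⟩⟩
    · exact Or.inl ⟨hu ▸ hj, by simpa [hu] using hs, by omega⟩
    · exact Or.inr ⟨hv ▸ hj, by simpa [hv] using hs, by omega⟩
  · rintro (⟨hu, hs, hv⟩ | ⟨hv, hs, hu⟩)
    · exact ⟨⟨u, hu⟩, Or.inl ⟨by simpa using hs, rfl, hv⟩⟩
    · exact ⟨⟨v, hv⟩, Or.inr ⟨by simpa using hs, hu, rfl⟩⟩

lemma OPath.val_eq_or {u v : Fin (s.length + 1)} (h : OPath s u v) :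
    (v : ℕ) = u + 1 ∨ (u : ℕ) = v + 1 := by
  rcases oPath_iff.1 h with ⟨-, -, h⟩ | ⟨-, -, h⟩ <;> omega

def IsOWalk (F : W → W → Prop) (s : List Bool) (g : ℕ → W) : Prop :=
  ∀ j (hj : j < s.length), if s[j] then F (g j) (g (j + 1)) else F (g (j + 1)) (g j)

lemma IsOWalk.digraphHom {g : ℕ → W} (hg : IsOWalk F s g) :
    DigraphHom (OPath s) F (fun x => g x) := by
  intro u v huv
  rcases oPath_iff.1 huv with ⟨hu, hs, hv⟩ | ⟨hv, hs, hu⟩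
  · simpa [hs, hv] using hg u hu
  · simpa [hs, hu] using hg v hv

lemma DigraphHom.isOWalk {h : Fin (s.length + 1) → W} (hh : DigraphHom (OPath s) F h) :
    IsOWalk F s (fun j => h ⟨min j s.length, by omega⟩) := by
  intro j hj
  have hj₀ : min j s.length = j := by omega
  have hj₁ : min (j + 1) s.length = j + 1 := by omega
  simp only [hj₀, hj₁]
  split_ifs with hs
  · exact hh _ _ (oPath_iff.2 (Or.inl ⟨hj, hs, rfl⟩))
  · exact hh _ _ (oPath_iff.2 (Or.inr ⟨hj, by simpa using hs, rfl⟩))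

lemma IsOWalk.head {b : Bool} {g : ℕ → W} (hg : IsOWalk F (b :: s) g) :
    if b then F (g 0) (g 1) else F (g 1) (g 0) := by
  have := hg 0 (by simp)
  rwa [List.getElem_cons_zero] at this

lemma IsOWalk.tail {b : Bool} {g : ℕ → W} (hg : IsOWalk F (b :: s) g) :
    IsOWalk F s (fun j => g (j + 1)) := fun j hj => by
  have := hg (j + 1) (by simpa using hj)
  rwa [List.getElem_cons_succ] at this

def IsLevelFn (F : W → W → Prop) (l : W → ℕ) : Prop :=
  ∀ u v, F u v → l v = l u + 1

lemma IsOWalk.level_add_count {l : W → ℕ} (hl : IsLevelFn F l) {g : ℕ → W}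
    (hg : IsOWalk F s g) : l (g s.length) + s.count false = l (g 0) + s.count true := by
  induction s generalizing g with
  | nil => simp
  | cons b s ih =>
    have hrest := ih hg.tail
    have hstep := hg.head
    simp only [zero_add] at hrest
    cases b <;>
    · have := hl _ _ hstep
      simp only [List.length_cons, List.count_cons, BEq.rfl, beq_true, beq_false, Bool.not_true,
        Bool.false_eq_true, ↓reduceIte, add_zero] at *
      omega

lemma IsOWalk.val_le_add {t : List Bool} {g : ℕ → Fin (t.length + 1)}
    (hg : IsOWalk (OPath t) s g) : (g s.length : ℕ) ≤ g 0 + s.length := by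
  induction s generalizing g with
  | nil => simp
  | cons b s ih =>
    have hrest := ih hg.tail
    have hstep : (g 1 : ℕ) ≤ g 0 + 1 := by
      have := hg.head
      split_ifs at this <;> have := this.val_eq_or <;> omega
    simp only [zero_add, List.length_cons] at *
    omega

end OrientedPath

section Paths

variable {V : Type*} {E : V → V → Prop}

lemma oPath_pWord_iff {n : ℕ} {u v : Fin ((PWord n).length + 1)} :
    OPath (PWord n) u v ↔ (v : ℕ) = u + 1 := by
  have hv := v.isLt
  rw [oPath_iff]
  simp only [PWord, List.length_replicate, List.getElem_replicate] at hv ⊢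
  simp only [true_and, Bool.true_eq_false, false_and, exists_prop, and_false, or_false]
  constructor <;> intro <;> omega

lemma homEx_pPath_iff {n : ℕ} :
    HomEx E (OPath (PWord n)) ↔ ∃ l : V → ℕ, IsLevelFn E l ∧ ∀ v, l v ≤ n := by
  constructor
  · rintro ⟨h, hh⟩
    refine ⟨fun v => h v, fun u v huv => oPath_pWord_iff.1 (hh u v huv), fun v => ?_⟩
    have := (h v).isLt
    simp only [PWord, List.length_replicate] at this ⊢
    omega
  · rintro ⟨l, hl, hle⟩
    refine ⟨fun v => ⟨l v, ?_⟩, fun u v huv => oPath_pWord_iff.2 (hl u v huv)⟩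
    simpa [PWord, Nat.lt_succ_iff] using hle v

lemma qTail_length (i : ℕ) : (QTail i).length = 2 * i + 1 := by
  induction i with
  | zero => rfl
  | succ i ih => simp only [QTail, List.length_cons, ih]; omega

lemma qWord_length (k : ℕ) : (QWord k).length = 2 * k + 3 := by
  simp [QWord, qTail_length]

lemma qTail_getElem (i j : ℕ) (h : j < (QTail i).length) :
    (QTail i)[j] = decide (j % 2 = 1 ∨ j = 2 * i) := by
  induction i generalizing j with
  | zero =>
    obtain rfl : j = 0 := by simpa [QTail] using h
    rfl
  | succ i ih =>
    match j with
    | 0 => simp [QTail]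
    | 1 => simp [QTail]
    | j + 2 =>
      simp only [QTail, List.getElem_cons_succ]
      rw [ih]
      simp only [decide_eq_decide]
      omega

lemma qWord_getElem (k j : ℕ) (h : j < (QWord k).length) :
    (QWord k)[j] = decide (j = 0 ∨ j % 2 = 1 ∨ j = 2 * k + 2) := by
  match j with
  | 0 => simp [QWord]
  | 1 => simp [QWord]
  | j + 2 =>
    simp only [QWord, List.getElem_cons_succ]
    rw [qTail_getElem]
    simp only [decide_eq_decide]
    omega

lemma qTail_count (i : ℕ) : (QTail i).count true = i + 1 ∧ (QTail i).count false = i := by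
  induction i with
  | zero => simp [QTail]
  | succ i ih => simp [QTail, ih]

lemma oPath_qWord_iff {k : ℕ} {u v : Fin ((QWord k).length + 1)} :
    OPath (QWord k) u v ↔
      ((v : ℕ) = u + 1 ∧ ((u : ℕ) = 0 ∨ (u : ℕ) % 2 = 1 ∨ (u : ℕ) = 2 * k + 2)) ∨
      ((u : ℕ) = v + 1 ∧ (v : ℕ) % 2 = 0 ∧ 0 < (v : ℕ) ∧ (v : ℕ) ≤ 2 * k) := by
  have hu := u.isLt
  have hv := v.isLt
  simp only [qWord_length] at hu hv
  simp only [oPath_iff, qWord_getElem, decide_eq_true_eq, decide_eq_false_iff_not, exists_prop,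
    qWord_length]
  omega

lemma IsOWalk.level_qWord {W : Type*} {F : W → W → Prop} {l : W → ℕ} (hl : IsLevelFn F l)
    {k : ℕ} {g : ℕ → W} (hg : IsOWalk F (QWord k) g) : l (g (2 * k + 3)) = l (g 0) + 3 := by
  have := hg.level_add_count hl
  rw [qWord_length] at this
  simp only [QWord, ne_eq, Bool.true_eq_false, not_false_eq_true, List.count_cons_of_ne,
    List.count_cons_self, qTail_count] at this
  omega

def qLevel (k v : ℕ) : ℕ :=
  if v = 0 then 0 else if v = 2 * k + 3 then 3 else 2 - v % 2

lemma isLevelFn_qLevel (k : ℕ) : IsLevelFn (OPath (QWord k)) (fun v => qLevel k v) := by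
  intro u v huv
  have hu := u.isLt
  have hv := v.isLt
  simp only [qWord_length] at hu hv
  rcases oPath_qWord_iff.1 huv with ⟨h₁, h₂⟩ | ⟨h₁, h₂, h₃, h₄⟩ <;>
  · simp only [qLevel]
    split_ifs <;> omega

lemma homEx_pPath_two_qPath (k : ℕ) : HomEx (OPath (PWord 2)) (OPath (QWord k)) := by
  refine ⟨fun x => ⟨x, ?_⟩, fun u v huv => ?_⟩
  · have := x.isLt
    simp only [PWord, List.length_replicate, qWord_length] at this ⊢
    omega
  · have hv := v.isLt
    simp only [PWord, List.length_replicate] at hv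
    rw [oPath_pWord_iff] at huv
    refine oPath_qWord_iff.2 (Or.inl ⟨huv, ?_⟩)
    dsimp only
    omega

/-- Folding the last zigzag of `Q_{k+1}` back onto `Q_k`. -/
lemma homEx_qPath_succ (k : ℕ) : HomEx (OPath (QWord (k + 1))) (OPath (QWord k)) := by
  refine ⟨fun x => ⟨if (x : ℕ) ≤ 2 * k + 2 then x else x - 2, ?_⟩, ?_⟩
  · have := x.isLt
    simp only [qWord_length] at this ⊢
    split_ifs <;> omega
  · intro u v huv
    have hu := u.isLt
    have hv := v.isLt
    simp only [qWord_length] at hu hv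
    rw [oPath_qWord_iff] at huv ⊢
    dsimp only
    split_ifs <;> omega

lemma not_homEx_qPath_pPath (k : ℕ) {n : ℕ} (hn : n < 3) :
    ¬ HomEx (OPath (QWord k)) (OPath (PWord n)) := by
  rintro ⟨h, hh⟩
  have hl : IsLevelFn (OPath (PWord n)) (fun x => x) := fun u v huv => oPath_pWord_iff.1 huv
  have hrise := hh.isOWalk.level_qWord hl
  have := (h ⟨min (2 * k + 3) (QWord k).length, by omega⟩).isLt
  simp only [PWord, List.length_replicate] at this
  omega

lemma not_homEx_qPath_qPath_succ (k : ℕ) : ¬ HomEx (OPath (QWord k)) (OPath (QWord (k + 1))) := by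
  rintro ⟨h, hh⟩
  set g := fun j => h ⟨min j (QWord k).length, by omega⟩
  have hg : IsOWalk (OPath (QWord (k + 1))) (QWord k) g := hh.isOWalk
  have hrise := hg.level_qWord (isLevelFn_qLevel (k + 1))
  have hdist := hg.val_le_add
  have := (g 0).isLt
  simp only [qLevel, qWord_length] at *
  split_ifs at hrise <;> omega

end Paths

section Zigzag

variable {V : Type*} {E : V → V → Prop} {l : V → ℕ}

/-- `g` walks `g 0 → g 1 → g 2 ← g 3 → g 4 ← ⋯` for `m` steps. -/
def IsZigzag (E : V → V → Prop) (g : ℕ → V) (m : ℕ) : Prop :=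
  ∀ j < m, if j = 0 ∨ j % 2 = 1 then E (g j) (g (j + 1)) else E (g (j + 1)) (g j)

lemma IsZigzag.update {g : ℕ → V} {m : ℕ} (hg : IsZigzag E g m) {v : V}
    (hv : if m = 0 ∨ m % 2 = 1 then E (g m) v else E v (g m)) :
    IsZigzag E (Function.update g (m + 1) v) (m + 1) := by
  intro j hj
  rcases Nat.lt_succ_iff_lt_or_eq.1 hj with hj | rfl
  · rw [Function.update_of_ne (by omega), Function.update_of_ne (by omega)]
    exact hg j hj
  · rwa [Function.update_self, Function.update_of_ne (by omega)]

lemma IsZigzag.level (hl : IsLevelFn E l) {g : ℕ → V} {m : ℕ} (hg : IsZigzag E g m)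
    (h₀ : l (g 0) = 0) : ∀ j ≤ m, l (g j) = if j = 0 then 0 else 2 - j % 2 := by
  intro j hj
  induction j with
  | zero => simpa using h₀
  | succ j ih =>
    have hprev := ih (by omega)
    have hstep := hg j (by omega)
    split_ifs at hstep <;> have := hl _ _ hstep <;> split_ifs at * <;> omega

def ZigzagReachable (E : V → V → Prop) (l : V → ℕ) (v : V) : Prop :=
  ∃ m g, l (g 0) = 0 ∧ IsZigzag E g m ∧ g m = v

lemma zigzagReachable_of_level_eq_zero {v : V} (hv : l v = 0) : ZigzagReachable E l v :=
  ⟨0, fun _ => v, hv, fun _ hj => absurd hj (Nat.not_lt_zero _), rfl⟩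

namespace ZigzagReachable

lemma level_le (hl : IsLevelFn E l) {v : V} (hv : ZigzagReachable E l v) : l v ≤ 2 := by
  obtain ⟨m, g, h₀, hg, rfl⟩ := hv
  rw [hg.level hl h₀ m le_rfl]
  split_ifs <;> omega

lemma step (hl : IsLevelFn E l) {u v : V} (hu : ZigzagReachable E l u)
    (huv : if l u ≤ 1 then E u v else E v u) : ZigzagReachable E l v := by
  obtain ⟨m, g, h₀, hg, rfl⟩ := hu
  have hlevel := hg.level hl h₀ m le_rfl
  refine ⟨m + 1, Function.update g (m + 1) v, ?_, hg.update ?_, Function.update_self ..⟩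
  · rwa [Function.update_of_ne (by omega)]
  · have hiff : (m = 0 ∨ m % 2 = 1) ↔ l (g m) ≤ 1 := by
      rw [hlevel]
      split_ifs <;> omega
    simpa only [hiff] using huv

/-- Closing a zigzag of even length with an up-edge gives a copy of `Q_k`. -/
lemma exists_homEx_qPath (hl : IsLevelFn E l) {v w : V} (hv : ZigzagReachable E l v)
    (hlv : l v = 2) (hvw : E v w) : ∃ k, HomEx (OPath (QWord k)) E := by
  obtain ⟨m, g, h₀, hg, rfl⟩ := hv
  have hlevel := hg.level hl h₀ m le_rfl
  obtain ⟨k, rfl⟩ : ∃ k, m = 2 * k + 2 := ⟨(m - 2) / 2, by split_ifs at hlevel <;> omega⟩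
  refine ⟨k, _, IsOWalk.digraphHom (g := Function.update g (2 * k + 3) w) fun j hj => ?_⟩
  rw [qWord_getElem]
  have hj' := hj
  rw [qWord_length] at hj'
  rcases Nat.lt_succ_iff_lt_or_eq.1 hj' with hj' | rfl
  · rw [Function.update_of_ne (by omega), Function.update_of_ne (by omega)]
    have := hg j hj'
    simpa only [decide_eq_true_eq, show j ≠ 2 * k + 2 by omega, or_false] using this
  · simpa [Function.update_of_ne] using hvw

end ZigzagReachable

/-- A level map of `D` to `P_3` can be lowered to a map into `P_2` by moving every vertex not
reachable by a zigzag from level `0` down one level, unless a reachable vertex of level `2` has an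
out-neighbour; then the zigzag ending there closes to a copy of some `Q_k`. -/
theorem exists_homEx_qPath (ha : HomEx E (OPath (PWord 3)))
    (hc : ¬ HomEx E (OPath (PWord 2))) : ∃ k, HomEx (OPath (QWord k)) E := by
  classical
  obtain ⟨l, hl, hl₃⟩ := homEx_pPath_iff.1 ha
  by_cases hstuck : ∀ u v, ZigzagReachable E l u → E u v → l u ≤ 1
  swap
  · push Not at hstuck
    obtain ⟨u, v, hu, huv, hlu⟩ := hstuck
    exact hu.exists_homEx_qPath hl (by have := hu.level_le hl; omega) huv
  refine absurd (homEx_pPath_iff.2 ⟨fun v => if ZigzagReachable E l v then l v else l v - 1,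
    fun u v huv => ?_, fun v => ?_⟩) hc
  · have hlevel := hl u v huv
    by_cases hu : ZigzagReachable E l u
    · have hlu := hstuck u v hu huv
      have hv := hu.step hl (by rwa [if_pos hlu])
      simp only [hu, hv, if_true]
      exact hlevel
    · have hlu : l u ≠ 0 := fun h => hu (zigzagReachable_of_level_eq_zero h)
      have hv : ¬ ZigzagReachable E l v := fun hv =>
        hu (hv.step hl (by rw [if_neg (by have := hv.level_le hl; omega)]; exact huv))
      simp only [hu, hv, if_false]
      omega
  · by_cases hv : ZigzagReachable E l v
    · simpa only [hv, if_true] using hv.level_le hl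
    · simp only [hv, if_false]
      have := hl₃ v
      omega

end Zigzag

theorem stmt_6 :
    ¬ ∃ (V : Type) (E : V → V → Prop), Finite V ∧
      -- (a) there is a homomorphism from D to P₃
      HomEx E (OPath (PWord 3)) ∧
      -- (b) there is a homomorphism from P₂ to D
      HomEx (OPath (PWord 2)) E ∧
      -- (c) there is no homomorphism from D to P₂
      ¬ HomEx E (OPath (PWord 2)) ∧
      -- (d) every finite digraph C between P₂ and D is hom-equivalent to D or to P₂
      (∀ (W : Type) (F : W → W → Prop), Finite W →
        HomEx (OPath (PWord 2)) F → HomEx F E →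
        (HomEx F E ∧ HomEx E F) ∨
        (HomEx F (OPath (PWord 2)) ∧ HomEx (OPath (PWord 2)) F)) := by
  rintro ⟨V, E, -, ha, -, hc, hd⟩
  obtain ⟨k, hQk⟩ := exists_homEx_qPath ha hc
  have hQk₁ : HomEx (OPath (QWord (k + 1))) E := (homEx_qPath_succ k).trans hQk
  rcases hd _ _ inferInstance (homEx_pPath_two_qPath (k + 1)) hQk₁ with ⟨-, hEQ⟩ | ⟨hQP, -⟩
  · exact not_homEx_qPath_qPath_succ k (hQk.trans hEQ)
  · exact not_homEx_qPath_pPath (k + 1) (by norm_num) hQP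
end

section
/- There exist consecutive directed path queries — namely P_3 and P_2 — such that no oriented path query lies maximally between them: there is no word s ∈ {0,1}^n (n ≥ 1) such that the oriented path D = O_s satisfies (a) there is a homomorphism from D to P_3, (b) there is a homomorphism from P_2 to D, (c) there is no homomorphism from D to P_2, and (d) for every finite digraph C, if there is a homomorphism from P_2 to C and a homomorphism from C to D, then C is hom-equivalent to D or to P_2. (In query terms: no oriented path query O satisfies P_3 ⊑ O ⊑_m P_2.) -/
def lev (s : List Bool) (p : ℕ) : ℤ := ((s.take p).map fun b => if b then (1:ℤ) else -1).sum

lemma lev_zero (s : List Bool) : lev s 0 = 0 := rfl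

lemma lev_cons (b : Bool) (s : List Bool) (p : ℕ) :
    lev (b :: s) (p+1) = (if b then 1 else -1) + lev s p := by
  simp [lev, List.take_succ_cons]

lemma lev_get (s : List Bool) (j : ℕ) (hj : j < s.length) :
    lev s (j+1) = lev s j + (if s.get ⟨j, hj⟩ then 1 else -1) := by
  induction s generalizing j with
  | nil => simp at hj
  | cons b s ih =>
    cases j with
    | zero => simp [lev_cons, lev_zero]
    | succ j =>
      have hj' : j < s.length := by simpa using hj
      rw [lev_cons, lev_cons, ih j hj']
      simp [List.get]
      ring

lemma edge_lev {s : List Bool} {u v : Fin (s.length + 1)} (h : OPath s u v) :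
    lev s (v : ℕ) = lev s (u : ℕ) + 1 := by
  obtain ⟨j, hc⟩ := h
  rcases hc with ⟨hg, hu, hv⟩ | ⟨hg, hu, hv⟩ <;>
    rw [List.get_eq_getElem] at hg <;>
    rw [hu, hv, lev_get s j j.isLt] <;>
    simp only [List.get_eq_getElem, Fin.eta, hg] <;> simp

lemma edge_adj {s : List Bool} {u v : Fin (s.length + 1)} (h : OPath s u v) :
    (v : ℕ) = (u : ℕ) + 1 ∨ (u : ℕ) = (v : ℕ) + 1 := by
  obtain ⟨j, hc⟩ := h
  rcases hc with ⟨_, hu, hv⟩ | ⟨_, hu, hv⟩ <;> omega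

lemma edge_of_adj_lev (s : List Bool) (x y : Fin (s.length + 1))
    (adj : (y : ℕ) = (x : ℕ) + 1 ∨ (x : ℕ) = (y : ℕ) + 1)
    (hl : lev s (y : ℕ) = lev s (x : ℕ) + 1) : OPath s x y := by
  rcases adj with h | h
  · have hx : (x : ℕ) < s.length := by have := y.isLt; omega
    refine ⟨⟨x, hx⟩, Or.inl ⟨?_, rfl, by simp [h]⟩⟩
    have := lev_get s x hx
    rw [← h] at this
    by_contra hg
    simp only [Bool.not_eq_true, List.get_eq_getElem] at hg
    simp only [List.get_eq_getElem] at this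
    simp [hg] at this
    omega
  · have hy : (y : ℕ) < s.length := by have := x.isLt; omega
    refine ⟨⟨y, hy⟩, Or.inr ⟨?_, by simp [h], rfl⟩⟩
    have := lev_get s y hy
    rw [← h] at this
    by_contra hg
    simp only [Bool.not_eq_false, List.get_eq_getElem] at hg
    simp only [List.get_eq_getElem] at this
    simp [hg] at this
    omega

lemma QTail_length (i : ℕ) : (QTail i).length = 2*i + 1 := by
  induction i with
  | zero => rfl
  | succ i ih => show (false :: true :: QTail i).length = _; simp [ih]; omega

lemma QWord_length (i : ℕ) : (QWord i).length = 2*i + 3 := by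
  show (true :: true :: QTail i).length = _; simp [QTail_length]

lemma PWord_length (n : ℕ) : (PWord n).length = n := by simp [PWord]

lemma PWord_get (n j : ℕ) (hj : j < (PWord n).length) : (PWord n).get ⟨j, hj⟩ = true := by
  simp [PWord]

lemma lev_PWord (n : ℕ) : ∀ p, p ≤ n → lev (PWord n) p = p := by
  intro p hp
  induction p with
  | zero => simp [lev_zero]
  | succ p ih =>
    have hp' : p < (PWord n).length := by rw [PWord_length]; omega
    rw [lev_get _ p hp', PWord_get, ih (by omega)]
    push_cast
    simp

lemma lev_QTail (i : ℕ) : ∀ p, p ≤ 2*i + 1 →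
    lev (QTail i) p = if p = 2*i+1 then 1 else if p % 2 = 0 then 0 else -1 := by
  induction i with
  | zero =>
    intro p hp
    interval_cases p
    · simp [lev_zero]
    · show lev [true] (0+1) = _
      rw [lev_cons]
      simp [lev_zero]
  | succ i ih =>
    intro p hp
    match p with
    | 0 => rw [lev_zero]; norm_num
    | 1 =>
      show lev (false :: true :: QTail i) (0+1) = _
      rw [lev_cons, lev_zero]
      norm_num
    | (p+2) =>
      show lev (false :: true :: QTail i) ((p+1)+1) = _
      rw [lev_cons, lev_cons, ih p (by omega)]
      norm_num
      split_ifs <;> omega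

def pat (m t : ℕ) : ℤ := if t = 0 then 0 else if t = m then 3 else if t % 2 = 0 then 2 else 1

lemma lev_QWord (i : ℕ) : ∀ p, p ≤ 2*i + 3 → lev (QWord i) p = pat (2*i+3) p := by
  intro p hp
  unfold pat
  match p with
  | 0 => rw [lev_zero]; norm_num
  | 1 =>
    show lev (true :: true :: QTail i) (0+1) = _
    rw [lev_cons, lev_zero]
    norm_num
  | (p+2) =>
    show lev (true :: true :: QTail i) ((p+1)+1) = _
    rw [lev_cons, lev_cons, lev_QTail i p (by omega)]
    norm_num
    split_ifs <;> omega

lemma homEx_trans {U V W : Type*} {D : U → U → Prop} {E : V → V → Prop} {F : W → W → Prop}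
    (h1 : HomEx D E) (h2 : HomEx E F) : HomEx D F := by
  obtain ⟨f, hf⟩ := h1
  obtain ⟨g, hg⟩ := h2
  exact ⟨g ∘ f, fun u v huv => hg _ _ (hf u v huv)⟩

/-- Between consecutive vertices of an oriented path there is an edge in one direction. -/
lemma opath_adj {s : List Bool} (u v : Fin (s.length + 1)) (hadj : (v : ℕ) = (u : ℕ) + 1) :
    OPath s u v ∨ OPath s v u := by
  have hu : (u : ℕ) < s.length := by have := v.isLt; omega
  by_cases hg : s.get ⟨u, hu⟩ = true
  · exact Or.inl ⟨⟨u, hu⟩, Or.inl ⟨hg, rfl, hadj⟩⟩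
  · exact Or.inr ⟨⟨u, hu⟩, Or.inr ⟨by simpa using hg, hadj, rfl⟩⟩

/-- A hom moves consecutive vertices to adjacent vertices. -/
lemma hom_step {s t : List Bool} {h : Fin (s.length + 1) → Fin (t.length + 1)}
    (hh : DigraphHom (OPath s) (OPath t) h) (u v : Fin (s.length + 1))
    (hadj : (v : ℕ) = (u : ℕ) + 1) :
    ((h v : Fin (t.length+1)) : ℕ) = ((h u : Fin (t.length+1)) : ℕ) + 1 ∨
    ((h u : Fin (t.length+1)) : ℕ) = ((h v : Fin (t.length+1)) : ℕ) + 1 := by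
  rcases opath_adj u v hadj with e | e
  · exact edge_adj (hh _ _ e)
  · rcases edge_adj (hh _ _ e) with hc | hc
    · exact Or.inr hc
    · exact Or.inl hc

/-- A hom preserves level differences along consecutive vertices. -/
lemma hom_lev_step {s t : List Bool} {h : Fin (s.length + 1) → Fin (t.length + 1)}
    (hh : DigraphHom (OPath s) (OPath t) h) (u v : Fin (s.length + 1))
    (hadj : (v : ℕ) = (u : ℕ) + 1) :
    lev t ((h v : Fin (t.length+1)) : ℕ) - lev t ((h u : Fin (t.length+1)) : ℕ)
      = lev s (v : ℕ) - lev s (u : ℕ) := by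
  rcases opath_adj u v hadj with e | e
  · have h1 := edge_lev (hh _ _ e)
    have h2 := edge_lev e
    omega
  · have h1 := edge_lev (hh _ _ e)
    have h2 := edge_lev e
    omega

/-- For a hom between oriented paths, levels differ by a constant. -/
lemma hom_lev_diff {s t : List Bool} {h : Fin (s.length + 1) → Fin (t.length + 1)}
    (hh : DigraphHom (OPath s) (OPath t) h) (u : Fin (s.length + 1)) :
    lev t ((h u : Fin (t.length+1)) : ℕ)
      = lev t ((h 0 : Fin (t.length+1)) : ℕ) + lev s (u : ℕ) := by
  suffices H : ∀ p, ∀ u : Fin (s.length + 1), (u : ℕ) = p →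
      lev t ((h u : Fin (t.length+1)) : ℕ)
        = lev t ((h 0 : Fin (t.length+1)) : ℕ) + lev s (u : ℕ) from H u u rfl
  intro p
  induction p with
  | zero =>
    intro u hu
    have : u = 0 := Fin.ext (by simpa using hu)
    subst this
    simp [lev_zero]
  | succ p ih =>
    intro u hu
    have hps : p < s.length := by have := u.isLt; omega
    have u' : Fin (s.length + 1) := ⟨p, by omega⟩
    set u' : Fin (s.length + 1) := ⟨p, by omega⟩ with hu'
    have hstep := hom_lev_step hh u' u (by simp [hu', hu])
    have hih := ih u' (by simp [hu'])
    have hval : (u' : ℕ) = p := by simp [hu']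
    rw [hval] at hstep hih
    rw [hu] at hstep ⊢
    omega

/-- If the level function shifted by `d` stays within `[0, m]`, there is a hom to `P_m`. -/
lemma homEx_P (s : List Bool) (m : ℕ) (d : ℤ)
    (hb : ∀ p, p ≤ s.length → 0 ≤ lev s p + d ∧ lev s p + d ≤ m) :
    HomEx (OPath s) (OPath (PWord m)) := by
  have hlen : (PWord m).length = m := PWord_length m
  refine ⟨fun u => ⟨(lev s (u : ℕ) + d).toNat, by
    have := hb u (by omega)
    omega⟩, ?_⟩
  intro u v huv
  have hlev := edge_lev huv
  have hu := hb (u : ℕ) (by omega)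
  have hv := hb (v : ℕ) (by omega)
  have hjlt : (lev s (u:ℕ) + d).toNat < (PWord m).length := by rw [hlen]; omega
  refine ⟨⟨(lev s (u:ℕ) + d).toNat, hjlt⟩, Or.inl ⟨PWord_get m _ _, rfl, ?_⟩⟩
  simp only
  omega

lemma pat_bounds (m t : ℕ) : 0 ≤ pat m t ∧ pat m t ≤ 3 := by
  unfold pat; split_ifs <;> omega

lemma pat_eq_zero {m t : ℕ} (h : pat m t = 0) : t = 0 := by
  unfold pat at h; split_ifs at h <;> omega

lemma pat_eq_three {m t : ℕ} (h : pat m t = 3) : t = m := by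
  unfold pat at h; split_ifs at h <;> omega

lemma lev_QWord_last (m : ℕ) : lev (QWord m) (2*m+3) = 3 := by
  rw [lev_QWord m _ (le_refl _)]
  unfold pat
  rw [if_neg (by omega), if_pos rfl]

/-- No hom from Q_m to P_2. -/
lemma noQP2 (m : ℕ) : ¬ HomEx (OPath (QWord m)) (OPath (PWord 2)) := by
  rintro ⟨h, hh⟩
  have hlenQ : (QWord m).length = 2*m+3 := QWord_length m
  have hlenP : (PWord 2).length = 2 := PWord_length 2
  set x : Fin ((QWord m).length + 1) := ⟨2*m+3, by omega⟩ with hx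
  have hd := hom_lev_diff hh x
  have hvx : (x : ℕ) = 2*m+3 := by simp [hx]
  rw [hvx, lev_QWord_last] at hd
  have hP : ∀ u : Fin ((PWord 2).length + 1), lev (PWord 2) (u:ℕ) = (u:ℕ) := fun u =>
    lev_PWord 2 _ (by have := u.isLt; omega)
  rw [hP, hP] at hd
  have h1 := (h x).isLt
  have h0 := (h 0).isLt
  omega

/-- No hom from Q_k to Q_{k+1}. -/
lemma noQQ (k : ℕ) : ¬ HomEx (OPath (QWord k)) (OPath (QWord (k+1))) := by
  rintro ⟨h, hh⟩
  have hlQ : (QWord k).length = 2*k+3 := QWord_length k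
  have hlQ' : (QWord (k+1)).length = 2*(k+1)+3 := QWord_length (k+1)
  have hlev' : ∀ u : Fin ((QWord (k+1)).length + 1),
      lev (QWord (k+1)) (u:ℕ) = pat (2*(k+1)+3) (u:ℕ) := fun u =>
    lev_QWord (k+1) _ (by have := u.isLt; omega)
  set x : Fin ((QWord k).length + 1) := ⟨2*k+3, by omega⟩ with hx
  have hd := hom_lev_diff hh x
  have hvx : (x : ℕ) = 2*k+3 := by simp [hx]
  rw [hvx, lev_QWord_last] at hd
  rw [hlev', hlev'] at hd
  have hb1 := pat_bounds (2*(k+1)+3) ((h x : Fin ((QWord (k+1)).length+1)) : ℕ)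
  have hb0 := pat_bounds (2*(k+1)+3) ((h 0 : Fin ((QWord (k+1)).length+1)) : ℕ)
  have hz : pat (2*(k+1)+3) ((h 0 : Fin ((QWord (k+1)).length+1)) : ℕ) = 0 := by omega
  have h3 : pat (2*(k+1)+3) ((h x : Fin ((QWord (k+1)).length+1)) : ℕ) = 3 := by omega
  have hz' := pat_eq_zero hz
  have h3' := pat_eq_three h3
  -- h moves by at most one per step, starting at 0
  have hstep : ∀ p, ∀ u : Fin ((QWord k).length + 1), (u : ℕ) = p →
      ((h u : Fin ((QWord (k+1)).length+1)) : ℕ) ≤ p := by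
    intro p
    induction p with
    | zero =>
      intro u hu
      have : u = 0 := Fin.ext (by simpa using hu)
      subst this
      omega
    | succ p ih =>
      intro u hu
      have hps : p < (QWord k).length := by have := u.isLt; omega
      set u' : Fin ((QWord k).length + 1) := ⟨p, by omega⟩ with hu'
      have hs := hom_step hh u' u (by simp [hu', hu])
      have hih := ih u' (by simp [hu'])
      omega
  have := hstep (2*k+3) x hvx
  omega

/-- Hom from P₂ into Q_m. -/
lemma homEx_P2_Q (m : ℕ) : HomEx (OPath (PWord 2)) (OPath (QWord m)) := by
  have hlP : (PWord 2).length = 2 := PWord_length 2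
  have hlQ : (QWord m).length = 2*m+3 := QWord_length m
  refine ⟨fun u => ⟨(u : ℕ), by have := u.isLt; omega⟩, ?_⟩
  intro u v huv
  have hadj := edge_adj huv
  have hlev := edge_lev huv
  have hP : ∀ w : Fin ((PWord 2).length + 1), lev (PWord 2) (w:ℕ) = (w:ℕ) := fun w =>
    lev_PWord 2 _ (by have := w.isLt; omega)
  rw [hP, hP] at hlev
  have hv1 : (v : ℕ) = (u : ℕ) + 1 := by omega
  apply edge_of_adj_lev
  · left; simpa using hv1
  · have hu2 : (u : ℕ) ≤ 1 := by have := v.isLt; omega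
    have e1 : lev (QWord m) (u : ℕ) = pat (2*m+3) (u:ℕ) := lev_QWord m _ (by omega)
    have e2 : lev (QWord m) (v : ℕ) = pat (2*m+3) (v:ℕ) := lev_QWord m _ (by omega)
    simp only
    rw [e1, e2]
    unfold pat
    split_ifs <;> omega

/-- The folding hom from Q_{m+1} onto Q_m. -/
lemma homEx_Q_fold (m : ℕ) : HomEx (OPath (QWord (m+1))) (OPath (QWord m)) := by
  have hlQ : (QWord m).length = 2*m+3 := QWord_length m
  have hlQ' : (QWord (m+1)).length = 2*(m+1)+3 := QWord_length (m+1)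
  have hpatf : ∀ a, a ≤ 2*m+5 →
      pat (2*m+3) (if a ≤ 2*m+2 then a else a - 2) = pat (2*(m+1)+3) a := by
    intro a ha
    unfold pat
    split_ifs <;> omega
  refine ⟨fun u => ⟨if (u : ℕ) ≤ 2*m+2 then (u:ℕ) else (u:ℕ) - 2, by
    have := u.isLt; split_ifs <;> omega⟩, ?_⟩
  intro u v huv
  have hadj := edge_adj huv
  have hlev := edge_lev huv
  have hu5 : (u : ℕ) ≤ 2*m+5 := by have := u.isLt; omega
  have hv5 : (v : ℕ) ≤ 2*m+5 := by have := v.isLt; omega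
  have e1 : lev (QWord (m+1)) (u : ℕ) = pat (2*(m+1)+3) (u:ℕ) := lev_QWord (m+1) _ (by omega)
  have e2 : lev (QWord (m+1)) (v : ℕ) = pat (2*(m+1)+3) (v:ℕ) := lev_QWord (m+1) _ (by omega)
  rw [e1, e2] at hlev
  apply edge_of_adj_lev
  · simp only
    split_ifs <;> omega
  · simp only
    have f1 : lev (QWord m) (if (u:ℕ) ≤ 2*m+2 then (u:ℕ) else (u:ℕ) - 2)
        = pat (2*m+3) (if (u:ℕ) ≤ 2*m+2 then (u:ℕ) else (u:ℕ) - 2) :=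
      lev_QWord m _ (by split_ifs <;> omega)
    have f2 : lev (QWord m) (if (v:ℕ) ≤ 2*m+2 then (v:ℕ) else (v:ℕ) - 2)
        = pat (2*m+3) (if (v:ℕ) ≤ 2*m+2 then (v:ℕ) else (v:ℕ) - 2) :=
      lev_QWord m _ (by split_ifs <;> omega)
    rw [f1, f2, hpatf _ hu5, hpatf _ hv5]
    omega

/-- From a level sequence 0,1,(2,1)*,2,3 along adjacent vertices we extract a hom from some Q_k. -/
lemma seg_hom (s : List Bool) (c : ℤ) (m : ℕ) (x : ℕ → Fin (s.length + 1))
    (hadj : ∀ t, t < m → ((x (t+1) : ℕ) = (x t : ℕ) + 1 ∨ (x t : ℕ) = (x (t+1) : ℕ) + 1))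
    (h0 : lev s (x 0 : ℕ) + c = 0) (hm : lev s (x m : ℕ) + c = 3)
    (hb : ∀ t, t ≤ m → 0 ≤ lev s (x t : ℕ) + c ∧ lev s (x t : ℕ) + c ≤ 3)
    (hne0 : ∀ t, 0 < t → t ≤ m → lev s (x t : ℕ) + c ≠ 0)
    (hne3 : ∀ t, t < m → lev s (x t : ℕ) + c ≠ 3) :
    ∃ k, HomEx (OPath (QWord k)) (OPath s) := by
  -- steps are ±1
  have hstep : ∀ t, t < m →
      lev s (x (t+1) : ℕ) = lev s (x t : ℕ) + 1 ∨ lev s (x t : ℕ) = lev s (x (t+1) : ℕ) + 1 := by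
    intro t ht
    rcases hadj t ht with hc | hc
    · rcases opath_adj (x t) (x (t+1)) hc with e | e
      · exact Or.inl (edge_lev e)
      · exact Or.inr (edge_lev e)
    · rcases opath_adj (x (t+1)) (x t) hc with e | e
      · exact Or.inr (edge_lev e)
      · exact Or.inl (edge_lev e)
  -- parity and magnitude
  have hpar : ∀ t, t ≤ m → (lev s (x t : ℕ) + c) % 2 = (t : ℤ) % 2 ∧ lev s (x t : ℕ) + c ≤ t := by
    intro t ht
    induction t with
    | zero => constructor <;> omega
    | succ t ih =>
      have h1 := ih (by omega)
      have h2 := hstep t (by omega)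
      constructor <;> push_cast <;> omega
  have hm3 : 3 ≤ m ∧ m % 2 = 1 := by
    have := hpar m (le_refl m)
    omega
  obtain ⟨k, hk⟩ : ∃ k, m = 2*k + 3 := ⟨(m - 3)/2, by omega⟩
  -- the level sequence matches the pattern
  have hpat : ∀ t, t ≤ m → lev s (x t : ℕ) + c = pat m t := by
    intro t ht
    have hpb := hb t ht
    have hp2 := (hpar t ht).1
    unfold pat
    split_ifs with e1 e2 e3
    · rw [e1]; exact h0
    · rw [e2]; exact hm
    · have := hne0 t (by omega) ht
      have := hne3 t (by omega)
      omega
    · have := hne0 t (by omega) ht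
      have := hne3 t (by omega)
      omega
  -- build the hom
  have hlQ : (QWord k).length = 2*k+3 := QWord_length k
  refine ⟨k, fun u => x (u : ℕ), ?_⟩
  intro u v huv
  have hadjQ := edge_adj huv
  have hlevQ := edge_lev huv
  have hum : (u : ℕ) ≤ m := by have := u.isLt; omega
  have hvm : (v : ℕ) ≤ m := by have := v.isLt; omega
  have eu : lev (QWord k) (u : ℕ) = pat (2*k+3) (u:ℕ) := lev_QWord k _ (by omega)
  have ev : lev (QWord k) (v : ℕ) = pat (2*k+3) (v:ℕ) := lev_QWord k _ (by omega)
  rw [eu, ev] at hlevQ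
  have hpu := hpat (u : ℕ) hum
  have hpv := hpat (v : ℕ) hvm
  rw [← hk] at hlevQ
  apply edge_of_adj_lev
  · show ((x (v:ℕ) : Fin (s.length+1)) : ℕ) = ((x (u:ℕ) : Fin (s.length+1)) : ℕ) + 1 ∨
      ((x (u:ℕ) : Fin (s.length+1)) : ℕ) = ((x (v:ℕ) : Fin (s.length+1)) : ℕ) + 1
    rcases hadjQ with hc | hc
    · have := hadj (u : ℕ) (by omega)
      rw [hc]
      omega
    · have := hadj (v : ℕ) (by omega)
      rw [hc]
      omega
  · show lev s ((x (v:ℕ) : Fin (s.length+1)) : ℕ) = lev s ((x (u:ℕ) : Fin (s.length+1)) : ℕ) + 1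
    omega

/-- Any oriented path mapping to P₃ but not to P₂ admits a hom from some Q_k. -/
lemma exists_Q_hom (s : List Bool) (hP3 : HomEx (OPath s) (OPath (PWord 3)))
    (hnP2 : ¬ HomEx (OPath s) (OPath (PWord 2))) :
    ∃ k, HomEx (OPath (QWord k)) (OPath s) := by
  classical
  obtain ⟨f, hf⟩ := hP3
  have hl3 : (PWord 3).length = 3 := PWord_length 3
  set c : ℤ := (((f 0 : Fin ((PWord 3).length + 1)) : ℕ) : ℤ) with hc
  have hbound : ∀ p, p ≤ s.length → 0 ≤ lev s p + c ∧ lev s p + c ≤ 3 := by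
    intro p hp
    set u : Fin (s.length + 1) := ⟨p, by omega⟩ with hu
    have hd := hom_lev_diff hf u
    have hP : ∀ w : Fin (s.length + 1),
        lev (PWord 3) ((f w : Fin ((PWord 3).length + 1)) : ℕ)
          = ((f w : Fin ((PWord 3).length + 1)) : ℕ) := fun w =>
      lev_PWord 3 _ (by have := (f w).isLt; omega)
    rw [hP, hP] at hd
    have h1 := (f u).isLt
    have hval : (u : ℕ) = p := by simp [hu]
    rw [hval] at hd
    omega
  have hz : ∃ a, a ≤ s.length ∧ lev s a + c = 0 := by
    by_contra hcon
    push_neg at hcon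
    exact hnP2 (homEx_P s 2 (c - 1) (by
      intro p hp
      have h1 := hbound p hp
      have h2 := hcon p hp
      omega))
  have h3 : ∃ b, b ≤ s.length ∧ lev s b + c = 3 := by
    by_contra hcon
    push_neg at hcon
    exact hnP2 (homEx_P s 2 c (by
      intro p hp
      have h1 := hbound p hp
      have h2 := hcon p hp
      omega))
  obtain ⟨a, han, ha0⟩ := hz
  obtain ⟨b, hbn, hb3⟩ := h3
  rcases lt_trichotomy a b with hab | hab | hab
  · -- zero before three
    have hex : ∃ q, a ≤ q ∧ q ≤ s.length ∧ lev s q + c = 3 := ⟨b, by omega, hbn, hb3⟩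
    obtain ⟨b0, hab0, hb0n, hb03, hb0min⟩ :
        ∃ b0, a ≤ b0 ∧ b0 ≤ s.length ∧ lev s b0 + c = 3 ∧
          ∀ q, q < b0 → ¬(a ≤ q ∧ q ≤ s.length ∧ lev s q + c = 3) :=
      ⟨Nat.find hex, (Nat.find_spec hex).1, (Nat.find_spec hex).2.1, (Nat.find_spec hex).2.2,
        fun q hq => Nat.find_min hex hq⟩
    obtain ⟨a0, haa0, ha0b0, ha00, ha0max⟩ :
        ∃ a0, a ≤ a0 ∧ a0 ≤ b0 ∧ lev s a0 + c = 0 ∧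
          ∀ q, a0 < q → q ≤ b0 → lev s q + c ≠ 0 :=
      ⟨Nat.findGreatest (fun p => lev s p + c = 0) b0, Nat.le_findGreatest (P := fun p => lev s p + c = 0) hab0 ha0,
        Nat.findGreatest_le b0, Nat.findGreatest_spec (P := fun p => lev s p + c = 0) hab0 ha0,
        fun q h1 h2 => Nat.findGreatest_is_greatest (P := fun p => lev s p + c = 0) h1 h2⟩
    set m := b0 - a0 with hmd
    have hmpos : 0 < m := by
      rcases Nat.eq_zero_or_pos m with h | h
      · exfalso; have : a0 = b0 := by omega
        rw [this] at ha00; omega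
      · exact h
    set x : ℕ → Fin (s.length + 1) := fun t => ⟨min (a0 + t) s.length, by omega⟩ with hx
    have hxval : ∀ t, t ≤ m → (x t : ℕ) = a0 + t := by
      intro t ht; simp [hx]; omega
    apply seg_hom s c m x
    · intro t ht
      rw [hxval t (by omega), hxval (t+1) (by omega)]
      left; omega
    · rw [hxval 0 (by omega)]
      simpa using ha00
    · rw [hxval m (by omega)]
      have : a0 + m = b0 := by omega
      rw [this]; exact hb03
    · intro t ht
      rw [hxval t ht]
      exact hbound _ (by omega)
    · intro t ht0 htm
      rw [hxval t htm]
      exact ha0max _ (by omega) (by omega)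
    · intro t htm
      rw [hxval t (by omega)]
      intro hcon
      exact hb0min (a0 + t) (by omega) ⟨by omega, by omega, hcon⟩
  · exfalso; rw [hab] at ha0; omega
  · -- three before zero
    have hex : ∃ q, b ≤ q ∧ q ≤ s.length ∧ lev s q + c = 0 := ⟨a, by omega, han, ha0⟩
    obtain ⟨a0, hba0, ha0n, ha00, ha0min⟩ :
        ∃ a0, b ≤ a0 ∧ a0 ≤ s.length ∧ lev s a0 + c = 0 ∧
          ∀ q, q < a0 → ¬(b ≤ q ∧ q ≤ s.length ∧ lev s q + c = 0) :=
      ⟨Nat.find hex, (Nat.find_spec hex).1, (Nat.find_spec hex).2.1, (Nat.find_spec hex).2.2,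
        fun q hq => Nat.find_min hex hq⟩
    obtain ⟨b0, hbb0, hb0a0, hb03, hb0max⟩ :
        ∃ b0, b ≤ b0 ∧ b0 ≤ a0 ∧ lev s b0 + c = 3 ∧
          ∀ q, b0 < q → q ≤ a0 → lev s q + c ≠ 3 :=
      ⟨Nat.findGreatest (fun p => lev s p + c = 3) a0, Nat.le_findGreatest (P := fun p => lev s p + c = 3) hba0 hb3,
        Nat.findGreatest_le a0, Nat.findGreatest_spec (P := fun p => lev s p + c = 3) hba0 hb3,
        fun q h1 h2 => Nat.findGreatest_is_greatest (P := fun p => lev s p + c = 3) h1 h2⟩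
    set m := a0 - b0 with hmd
    have hmpos : 0 < m := by
      rcases Nat.eq_zero_or_pos m with h | h
      · exfalso; have : b0 = a0 := by omega
        rw [this] at hb03; omega
      · exact h
    set x : ℕ → Fin (s.length + 1) := fun t => ⟨a0 - t, by omega⟩ with hx
    have hxval : ∀ t, (x t : ℕ) = a0 - t := by intro t; simp [hx]
    apply seg_hom s c m x
    · intro t ht
      rw [hxval t, hxval (t+1)]
      right; omega
    · rw [hxval 0]
      simpa using ha00
    · rw [hxval m]
      have : a0 - m = b0 := by omega
      rw [this]; exact hb03
    · intro t ht
      rw [hxval t]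
      exact hbound _ (by omega)
    · intro t ht0 htm
      rw [hxval t]
      intro hcon
      exact ha0min (a0 - t) (by omega) ⟨by omega, by omega, hcon⟩
    · intro t htm
      rw [hxval t]
      exact hb0max _ (by omega) (by omega)

theorem stmt_7 :
    ¬ ∃ s : List Bool, 1 ≤ s.length ∧
      -- (a) there is a homomorphism from D = O_s to P₃
      HomEx (OPath s) (OPath (PWord 3)) ∧
      -- (b) there is a homomorphism from P₂ to D
      HomEx (OPath (PWord 2)) (OPath s) ∧
      -- (c) there is no homomorphism from D to P₂
      ¬ HomEx (OPath s) (OPath (PWord 2)) ∧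
      -- (d) every finite digraph C between P₂ and D is hom-equivalent to D or to P₂
      (∀ (W : Type) (F : W → W → Prop), Finite W →
        HomEx (OPath (PWord 2)) F → HomEx F (OPath s) →
        (HomEx F (OPath s) ∧ HomEx (OPath s) F) ∨
        (HomEx F (OPath (PWord 2)) ∧ HomEx (OPath (PWord 2)) F)) := by
  rintro ⟨s, hs, hP3, hP2D, hnDP2, hd⟩
  obtain ⟨k, hQk⟩ := exists_Q_hom s hP3 hnDP2
  have h1 : HomEx (OPath (PWord 2)) (OPath (QWord (k+1))) := homEx_P2_Q (k+1)
  have h2 : HomEx (OPath (QWord (k+1))) (OPath s) := homEx_trans (homEx_Q_fold k) hQk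
  rcases hd (Fin ((QWord (k+1)).length + 1)) (OPath (QWord (k+1))) inferInstance h1 h2 with
    ⟨_, hDQ⟩ | ⟨hQP2, _⟩
  · exact noQQ k (homEx_trans hQk hDQ)
  · exact noQP2 (k+1) hQP2
end
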